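/- For every K > 0, N < 0, D ∈ (0,∞) and θ ∈ (0,1), one has K_{1,D}(θ) > I_{(K,N,∞)}(θ). -/

import Mathlib

/-!
Write `F s = cosh (√σ s) ^ (N - 1)`, `M = ∫ F` and `A = ∫_ξ^{ξ+D} F`. As `N - 1 < 0`, `F` is
log-concave, so the ratio `(∫_d^∞ F) / F d` is nonincreasing in `d`; and `log F` is
`l`-Lipschitz with `l = (1 - N) √σ`, so the mass of `F` to the right of a window of length `D`
is at least `e^{-lD}` times the mass inside it. If the quantile `d` of the window lies to the
right of the global quantile `c`, the first fact gives `F c · ∫_d^∞ F ≤ F d · (1 - θ) M` and the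
second `∫_d^∞ F ≥ (1 - θ + e^{-lD}) A`, whence `F d / A ≥ (1 + e^{-lD}) F c / M` uniformly in
`ξ`. The case `d ≤ c` is its mirror image under `s ↦ -s`.
-/

open Set MeasureTheory intervalIntegral

namespace Real

lemma cosh_le_cosh_mul_exp_abs_sub (p q : ℝ) : cosh q ≤ cosh p * exp |q - p| := by
  have h₁ : exp q ≤ exp p * exp |q - p| := by
    rw [← exp_add, exp_le_exp]; linarith [le_abs_self (q - p)]
  have h₂ : exp (-q) ≤ exp (-p) * exp |q - p| := by
    rw [← exp_add, exp_le_exp]; linarith [neg_abs_le (q - p)]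
  rw [cosh_eq, cosh_eq]
  linarith

lemma cosh_add_mul_cosh_add_le {h k : ℝ} (hhk : 0 ≤ h * k) (x : ℝ) :
    cosh (x + h) * cosh (x + k) ≤ cosh x * cosh (x + h + k) := by
  have two_mul_cosh_mul_cosh (p q : ℝ) :
      2 * (cosh p * cosh q) = cosh (p + q) + cosh (p - q) := by
    rw [cosh_add, cosh_sub]; ring
  have e₁ := two_mul_cosh_mul_cosh (x + h) (x + k)
  have e₂ := two_mul_cosh_mul_cosh x (x + h + k)
  rw [show x + h + (x + k) = x + (x + h + k) by ring, show x + h - (x + k) = h - k by ring] at e₁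
  rw [show x - (x + h + k) = -(h + k) by ring, cosh_neg] at e₂
  have : cosh (h - k) ≤ cosh (h + k) := cosh_le_cosh.2 <| sq_le_sq.1 <| by nlinarith
  linarith

lemma one_add_abs_le_two_mul_cosh (x : ℝ) : 1 + |x| ≤ 2 * cosh x := by
  rw [← cosh_abs, cosh_eq]
  linarith [add_one_le_exp |x|, exp_pos (-|x|)]

lemma integrable_cosh_rpow {r : ℝ} (hr : r < -1) : Integrable fun x ↦ cosh x ^ r := by
  refine ((integrable_one_add_norm (E := ℝ) (r := -r) (by simp; linarith)).const_mul
    ((2 : ℝ) ^ (-r))).mono'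
    (continuous_cosh.rpow_const fun x ↦ .inl (cosh_pos x).ne').aestronglyMeasurable
    (ae_of_all _ fun x ↦ ?_)
  rw [norm_of_nonneg (rpow_nonneg (cosh_pos x).le _), neg_neg, Real.norm_eq_abs]
  calc cosh x ^ r ≤ ((1 + |x|) / 2) ^ r :=
        rpow_le_rpow_of_nonpos (by positivity) (by linarith [one_add_abs_le_two_mul_cosh x])
          (by linarith)
    _ = 2 ^ (-r) * (1 + |x|) ^ r := by
        rw [div_rpow (by positivity) (by norm_num), rpow_neg (by norm_num), div_eq_inv_mul]

end Real

open Real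

-- For positive continuous `F` these say that `log F` is concave, resp. `l`-Lipschitz.
def IsLogConcave (F : ℝ → ℝ) : Prop :=
  ∀ x h k, 0 ≤ h → 0 ≤ k → F x * F (x + h + k) ≤ F (x + h) * F (x + k)

def IsLogLipschitzWith (l : ℝ) (F : ℝ → ℝ) : Prop :=
  ∀ s t, F s ≤ F t * exp (l * |s - t|)

lemma isLogConcave_cosh_mul_rpow {a r : ℝ} (hr : r ≤ 0) :
    IsLogConcave fun s ↦ cosh (a * s) ^ r := by
  intro x h k hh hk
  have hprod := cosh_add_mul_cosh_add_le (h := a * h) (k := a * k)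
    (by nlinarith [mul_nonneg hh hk, sq_nonneg a]) (a * x)
  simp only [← mul_add] at hprod
  rw [← mul_rpow (cosh_pos _).le (cosh_pos _).le, ← mul_rpow (cosh_pos _).le (cosh_pos _).le]
  exact rpow_le_rpow_of_nonpos (by positivity) hprod hr

lemma isLogLipschitzWith_cosh_mul_rpow {a r : ℝ} (hr : r ≤ 0) :
    IsLogLipschitzWith (-r * |a|) fun s ↦ cosh (a * s) ^ r := by
  intro s t
  have hcosh : cosh (a * t) * exp (-(|a| * |s - t|)) ≤ cosh (a * s) := by
    have := cosh_le_cosh_mul_exp_abs_sub (a * s) (a * t)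
    rw [← mul_sub, abs_mul, abs_sub_comm] at this
    rwa [exp_neg, ← div_eq_mul_inv, div_le_iff₀ (exp_pos _)]
  calc cosh (a * s) ^ r ≤ (cosh (a * t) * exp (-(|a| * |s - t|))) ^ r :=
        rpow_le_rpow_of_nonpos (by positivity) hcosh hr
    _ = cosh (a * t) ^ r * exp (-r * |a| * |s - t|) := by
        rw [mul_rpow (cosh_pos _).le (exp_pos _).le, ← exp_mul]
        ring_nf

section

variable {F : ℝ → ℝ} {l : ℝ}

lemma IsLogConcave.comp_neg (hF : IsLogConcave F) : IsLogConcave fun s ↦ F (-s) := by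
  intro x h k hh hk
  have := hF (-x - h - k) k h hk hh
  simp only [neg_add, ← sub_eq_add_neg]
  rw [show -x - h - k + k + h = -x by ring, show -x - h - k + k = -x - h by ring,
    show -x - h - k + h = -x - k by ring] at this
  linarith

lemma IsLogLipschitzWith.comp_neg (hF : IsLogLipschitzWith l F) :
    IsLogLipschitzWith l fun s ↦ F (-s) := by
  intro s t
  have := hF (-s) (-t)
  rwa [show -s - -t = -(s - t) by ring, abs_neg] at this

lemma IsLogConcave.mul_integral_Ioi_le (hF : IsLogConcave F) (hint : Integrable F) {c d : ℝ}
    (hcd : c ≤ d) : F c * ∫ s in Ioi d, F s ≤ F d * ∫ s in Ioi c, F s := by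
  have hshift : ∫ s in Ioi d, F s = ∫ x in Ioi c, F (x + (d - c)) := by
    rw [← (measurePreserving_add_right volume (d - c)).setIntegral_preimage_emb
      (measurableEmbedding_addRight (d - c)), preimage_add_const_Ioi, sub_sub_cancel]
  rw [hshift, ← MeasureTheory.integral_const_mul, ← MeasureTheory.integral_const_mul]
  refine setIntegral_mono_on ((hint.comp_add_right _).integrableOn.const_mul _)
    (hint.integrableOn.const_mul _) measurableSet_Ioi fun x hx ↦ ?_
  have := hF c (d - c) (x - c) (sub_nonneg.2 hcd) (sub_nonneg.2 (le_of_lt hx))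
  rwa [add_sub_cancel, add_sub_cancel, show d + (x - c) = x + (d - c) by ring] at this

lemma IsLogLipschitzWith.exp_mul_intervalIntegral_le_integral_Ioi (hF : IsLogLipschitzWith l F)
    (hint : Integrable F) (hnn : ∀ s, 0 ≤ F s) {D : ℝ} (hD : 0 ≤ D) (ξ : ℝ) :
    exp (-(l * D)) * ∫ s in ξ..ξ + D, F s ≤ ∫ s in Ioi (ξ + D), F s := by
  have hshift : ∀ s, exp (-(l * D)) * F s ≤ F (s + D) := fun s ↦ by
    have := hF s (s + D)
    rw [sub_add_cancel_left, abs_neg, abs_of_nonneg hD] at this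
    rwa [exp_neg, ← div_eq_inv_mul, div_le_iff₀ (exp_pos _)]
  calc exp (-(l * D)) * ∫ s in ξ..ξ + D, F s
      = ∫ s in ξ..ξ + D, exp (-(l * D)) * F s :=
        (intervalIntegral.integral_const_mul _ _).symm
    _ ≤ ∫ s in ξ..ξ + D, F (s + D) :=
        integral_mono_on (by linarith) (hint.intervalIntegrable.const_mul _)
          (hint.comp_add_right D).intervalIntegrable fun s _ ↦ hshift s
    _ = ∫ s in ξ + D..ξ + D + D, F s := integral_comp_add_right F D
    _ ≤ ∫ s in Ioi (ξ + D), F s := by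
        rw [integral_of_le (by linarith)]
        exact setIntegral_mono_set hint.integrableOn (ae_of_all _ hnn)
          Ioc_subset_Ioi_self.eventuallyLE

lemma one_add_exp_mul_mul_intervalIntegral_le_of_le (hlc : IsLogConcave F)
    (hlip : IsLogLipschitzWith l F) (hint : Integrable F) (hnn : ∀ s, 0 ≤ F s) {D ξ c d p : ℝ}
    (hD : 0 ≤ D) (hp₀ : 0 < p) (hp₁ : p ≤ 1) (hcd : c ≤ d) (hdξ : d ≤ ξ + D)
    (hc : ∫ s in Ioi c, F s = p * ∫ s, F s)
    (hd : ∫ s in d..ξ + D, F s = p * ∫ s in ξ..ξ + D, F s) :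
    (1 + exp (-(l * D))) * F c * (∫ s in ξ..ξ + D, F s) ≤ F d * ∫ s, F s := by
  set A := ∫ s in ξ..ξ + D, F s
  set β := exp (-(l * D))
  have hA : 0 ≤ A := integral_nonneg (by linarith) fun s _ ↦ hnn s
  have hsplit : ∫ s in Ioi d, F s = (∫ s in d..ξ + D, F s) + ∫ s in Ioi (ξ + D), F s := by
    rw [integral_of_le hdξ, ← setIntegral_union (Ioc_disjoint_Ioi le_rfl) measurableSet_Ioi
      hint.integrableOn hint.integrableOn, Ioc_union_Ioi_eq_Ioi hdξ]
  have htail : (p + β) * A ≤ ∫ s in Ioi d, F s := by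
    rw [hsplit, hd]
    linarith [hlip.exp_mul_intervalIntegral_le_integral_Ioi hint hnn hD ξ]
  have hchord : F c * ((p + β) * A) ≤ F d * (p * ∫ s, F s) :=
    hc ▸ (mul_le_mul_of_nonneg_left htail (hnn c)).trans (hlc.mul_integral_Ioi_le hint hcd)
  have hβp : (1 + β) * p ≤ p + β := by nlinarith [exp_pos (-(l * D))]
  refine le_of_mul_le_mul_right ?_ hp₀
  calc (1 + β) * F c * A * p = F c * ((1 + β) * p * A) := by ring
    _ ≤ F c * ((p + β) * A) := by gcongr; exact hnn c
    _ ≤ F d * (p * ∫ s, F s) := hchord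
    _ = F d * (∫ s, F s) * p := by ring

lemma one_add_exp_mul_mul_intervalIntegral_le_of_ge (hlc : IsLogConcave F)
    (hlip : IsLogLipschitzWith l F) (hint : Integrable F) (hnn : ∀ s, 0 ≤ F s) {D ξ c d p : ℝ}
    (hD : 0 ≤ D) (hp₀ : 0 < p) (hp₁ : p ≤ 1) (hdc : d ≤ c) (hξd : ξ ≤ d)
    (hc : ∫ s in Iic c, F s = p * ∫ s, F s)
    (hd : ∫ s in ξ..d, F s = p * ∫ s in ξ..ξ + D, F s) :
    (1 + exp (-(l * D))) * F c * (∫ s in ξ..ξ + D, F s) ≤ F d * ∫ s, F s := by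
  have hξ : -(ξ + D) + D = -ξ := by ring
  have := one_add_exp_mul_mul_intervalIntegral_le_of_le hlc.comp_neg hlip.comp_neg
    hint.comp_neg (fun s ↦ hnn (-s)) (ξ := -(ξ + D)) (c := -c) (d := -d) hD hp₀ hp₁
    (neg_le_neg hdc) (by linarith)
    (by rw [integral_comp_neg_Ioi, neg_neg, integral_neg_eq_self, hc])
    (by rw [hξ, integral_comp_neg, integral_comp_neg, neg_neg, neg_neg, neg_neg, hd])
  rwa [hξ, integral_comp_neg, neg_neg, neg_neg, neg_neg, neg_neg, integral_neg_eq_self] at this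

lemma exists_mem_Ioo_intervalIntegral_eq_mul (hcont : Continuous F) (hpos : ∀ s, 0 < F s)
    {D θ : ℝ} (hD : 0 < D) (hθ : θ ∈ Ioo 0 1) (ξ : ℝ) :
    ∃ d ∈ Ioo ξ (ξ + D), ∫ s in ξ..d, F s = θ * ∫ s in ξ..ξ + D, F s := by
  have hA : 0 < ∫ s in ξ..ξ + D, F s :=
    intervalIntegral_pos_of_pos (hcont.intervalIntegrable _ _) hpos (by linarith)
  refine intermediate_value_Ioo (by linarith)
    (continuous_primitive (fun u v ↦ hcont.intervalIntegrable u v) ξ).continuousOn ?_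
  rw [integral_same]
  exact ⟨mul_pos hθ.1 hA, by nlinarith [hθ.2]⟩

/-- `K_{1,D}(θ)` is the infimum of this set: `d` is the `θ`-quantile of `F` on the window
`[ξ, ξ + D]`. -/
def windowQuantileValues (F : ℝ → ℝ) (D θ : ℝ) : Set ℝ :=
  {y | ∃ ξ : ℝ, ∃ d ∈ Ioo ξ (ξ + D),
    θ = (∫ s in ξ..d, F s) / (∫ s in ξ..ξ + D, F s) ∧ y = F d / ∫ s in ξ..ξ + D, F s}

lemma windowQuantileValues_nonempty (hcont : Continuous F) (hpos : ∀ s, 0 < F s)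
    {D θ : ℝ} (hD : 0 < D) (hθ : θ ∈ Ioo 0 1) : (windowQuantileValues F D θ).Nonempty := by
  obtain ⟨d, hd, hd'⟩ := exists_mem_Ioo_intervalIntegral_eq_mul hcont hpos hD hθ 0
  have hA : 0 < ∫ s in (0 : ℝ)..0 + D, F s :=
    intervalIntegral_pos_of_pos (hcont.intervalIntegrable _ _) hpos (by linarith)
  exact ⟨_, 0, d, hd, by rw [hd', mul_div_cancel_right₀ θ hA.ne'], rfl⟩

lemma one_add_exp_mul_div_le_of_mem_windowQuantileValues (hcont : Continuous F)
    (hpos : ∀ s, 0 < F s) (hint : Integrable F) (hlc : IsLogConcave F)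
    (hlip : IsLogLipschitzWith l F) {D θ c y : ℝ} (hD : 0 < D) (hθ : θ ∈ Ioo 0 1)
    (hc : ∫ s in Iic c, F s = θ * ∫ s, F s) (hy : y ∈ windowQuantileValues F D θ) :
    (1 + exp (-(l * D))) * (F c / ∫ s, F s) ≤ y := by
  obtain ⟨ξ, d, hd, hθd, rfl⟩ := hy
  obtain ⟨hθ₀, hθ₁⟩ := hθ
  have hnn : ∀ s, 0 ≤ F s := fun s ↦ (hpos s).le
  have hM : 0 < ∫ s, F s := integral_pos_of_integrable_nonneg_nonzero hcont hint hnn (hpos 0).ne'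
  have hA : 0 < ∫ s in ξ..ξ + D, F s :=
    intervalIntegral_pos_of_pos (hcont.intervalIntegrable _ _) hpos (by linarith)
  have hξd : ∫ s in ξ..d, F s = θ * ∫ s in ξ..ξ + D, F s := by
    rw [hθd, div_mul_cancel₀ _ hA.ne']
  rw [← mul_div_assoc, div_le_div_iff₀ hM hA]
  rcases le_total c d with hcd | hdc
  · have hIoi : ∫ s in Ioi c, F s = (1 - θ) * ∫ s, F s := by
      linarith [integral_Iic_add_Ioi (b := c) hint.integrableOn hint.integrableOn]
    have hsplit := integral_add_adjacent_intervals (hcont.intervalIntegrable (μ := volume) ξ d)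
      (hcont.intervalIntegrable d (ξ + D))
    exact one_add_exp_mul_mul_intervalIntegral_le_of_le hlc hlip hint hnn hD.le
      (by linarith) (by linarith) hcd hd.2.le hIoi (by linarith)
  · exact one_add_exp_mul_mul_intervalIntegral_le_of_ge hlc hlip hint hnn hD.le hθ₀ hθ₁.le
      hdc hd.1.le hc hξd

theorem div_integral_lt_sInf_windowQuantileValues (hcont : Continuous F) (hpos : ∀ s, 0 < F s)
    (hint : Integrable F) (hlc : IsLogConcave F) (hlip : IsLogLipschitzWith l F) {D θ c : ℝ}
    (hD : 0 < D) (hθ : θ ∈ Ioo 0 1) (hc : θ = (∫ s in Iic c, F s) / ∫ s, F s) :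
    F c / ∫ s, F s < sInf (windowQuantileValues F D θ) := by
  have hM : 0 < ∫ s, F s :=
    integral_pos_of_integrable_nonneg_nonzero hcont hint (fun s ↦ (hpos s).le) (hpos 0).ne'
  have hIic : ∫ s in Iic c, F s = θ * ∫ s, F s := by rw [hc, div_mul_cancel₀ _ hM.ne']
  calc F c / ∫ s, F s < (1 + exp (-(l * D))) * (F c / ∫ s, F s) :=
        lt_mul_of_one_lt_left (div_pos (hpos c) hM) (by linarith [exp_pos (-(l * D))])
    _ ≤ sInf (windowQuantileValues F D θ) :=
        le_csInf (windowQuantileValues_nonempty hcont hpos hD hθ) fun _ hy ↦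
          one_add_exp_mul_div_le_of_mem_windowQuantileValues hcont hpos hint hlc hlip hD hθ
            hIic hy

end

/-- `K_{1,D}(θ) > I_{(K,N,∞)}(θ)` for all `K > 0`, `N < 0`,
`D ∈ (0,∞)`, `θ ∈ (0,1)`.  Here `σ = K/(1-N)`, `c = c(θ)` is characterized by
`hc`, and `K_{1,D}(θ)` is the infimum over `ξ ∈ ℝ` of the values
`cosh^{N-1}(√σ d_{1,ξ}(θ)) / ∫_ξ^{ξ+D} cosh^{N-1}(√σ s) ds`, expressed as the
`sInf` of the set of such values (with `d = d_{1,ξ}(θ)` characterized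
implicitly). -/
theorem stmt12 (K N σ D θ : ℝ) (hK : 0 < K) (hN : N < 0) (hσ : σ = K / (1 - N))
    (hD : 0 < D) (hθ : θ ∈ Set.Ioo (0:ℝ) 1)
    (c : ℝ)
    (hc : θ = (∫ s in Set.Iic c, Real.cosh (Real.sqrt σ * s) ^ (N - 1)) /
        (∫ s : ℝ, Real.cosh (Real.sqrt σ * s) ^ (N - 1))) :
    sInf { y : ℝ | ∃ ξ : ℝ, ∃ d ∈ Set.Ioo ξ (ξ + D),
        θ = (∫ s in ξ..d, Real.cosh (Real.sqrt σ * s) ^ (N - 1)) /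
              (∫ s in ξ..(ξ + D), Real.cosh (Real.sqrt σ * s) ^ (N - 1)) ∧
        y = Real.cosh (Real.sqrt σ * d) ^ (N - 1) /
              (∫ s in ξ..(ξ + D), Real.cosh (Real.sqrt σ * s) ^ (N - 1)) } >
      Real.cosh (Real.sqrt σ * c) ^ (N - 1) /
        (∫ s : ℝ, Real.cosh (Real.sqrt σ * s) ^ (N - 1)) := by
  have hσ₀ : 0 < σ := hσ ▸ div_pos hK (by linarith)
  exact div_integral_lt_sInf_windowQuantileValues
    ((continuous_cosh.comp (continuous_const.mul continuous_id)).rpow_const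
      fun _ ↦ .inl (cosh_pos _).ne')
    (fun _ ↦ rpow_pos_of_pos (cosh_pos _) _)
    ((integrable_cosh_rpow (by linarith)).comp_mul_left' (sqrt_pos.2 hσ₀).ne')
    (isLogConcave_cosh_mul_rpow (by linarith)) (isLogLipschitzWith_cosh_mul_rpow (by linarith))
    hD hθ hc
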